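/- Let E₁ and E₂ be smooth functions on the upper half-plane H² = {(x,y) ∈ ℝ² : y > 0} such that ∇dE₁ + RgE₁ = ∇dE₂ + RgE₂ componentwise, i.e. (E₁)_xx − (E₁)_y/y − E₁/y² = (E₂)_xx − (E₂)_y/y − E₂/y², (E₁)_xy + (E₁)_x/y = (E₂)_xy + (E₂)_x/y, and (E₁)_yy + (E₁)_y/y − E₁/y² = (E₂)_yy + (E₂)_y/y − E₂/y² on H². Then there exist real constants a, b, c with E₁ − E₂ = a·(x/y) + b·(1/y) + c·(x² + y²)/y on H². -/

import Mathlib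

/-- Partial derivative in the first coordinate direction on `ℝ²`. -/
noncomputable def pdx (f : (ℝ × ℝ) → ℝ) (z : ℝ × ℝ) : ℝ := fderiv ℝ f z (1, 0)

/-- Partial derivative in the second coordinate direction on `ℝ²`. -/
noncomputable def pdy (f : (ℝ × ℝ) → ℝ) (z : ℝ × ℝ) : ℝ := fderiv ℝ f z (0, 1)

/-- The upper half-plane `H² = {(x, y) : y > 0}`. -/
def UHP : Set (ℝ × ℝ) := {z : ℝ × ℝ | 0 < z.2}

/-!
The difference `F = E₁ - E₂` solves the homogeneous system
`F_xx = F_y/y + F/y²`, `F_xy = -F_x/y`, `F_yy = -F_y/y + F/y²`. On the connected half-plane this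
integrates in three steps, each one a function with vanishing gradient: `F/y + F_y = K`, then
`y F_x - K x = A`, and finally `y F - (K/2)(x² + y²) - A x = B`, which is the claimed form.
-/

open Filter Topology

lemma isOpen_UHP : IsOpen UHP := isOpen_lt continuous_const continuous_snd

lemma isPreconnected_UHP : IsPreconnected UHP :=
  ((convex_Ioi 0).linear_preimage (LinearMap.snd ℝ ℝ ℝ)).isPreconnected

section Partials

variable {f g : ℝ × ℝ → ℝ} {s : Set (ℝ × ℝ)} {z : ℝ × ℝ}

lemma pdx_sub (hf : DifferentiableAt ℝ f z) (hg : DifferentiableAt ℝ g z) :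
    pdx (f - g) z = pdx f z - pdx g z := by
  simp [pdx, fderiv_sub hf hg]

lemma pdy_sub (hf : DifferentiableAt ℝ f z) (hg : DifferentiableAt ℝ g z) :
    pdy (f - g) z = pdy f z - pdy g z := by
  simp [pdy, fderiv_sub hf hg]

lemma Filter.EventuallyEq.pdx_eq (h : f =ᶠ[𝓝 z] g) : pdx f z = pdx g z := by
  rw [pdx, pdx, h.fderiv_eq]

lemma Filter.EventuallyEq.pdy_eq (h : f =ᶠ[𝓝 z] g) : pdy f z = pdy g z := by
  rw [pdy, pdy, h.fderiv_eq]

lemma ContDiffAt.differentiableAt_fderiv (hf : ContDiffAt ℝ 2 f z) :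
    DifferentiableAt ℝ (fderiv ℝ f) z :=
  (hf.fderiv_right (m := 1) (by norm_num)).differentiableAt one_ne_zero

lemma ContDiffAt.differentiableAt_pdx (hf : ContDiffAt ℝ 2 f z) : DifferentiableAt ℝ (pdx f) z :=
  hf.differentiableAt_fderiv.clm_apply (differentiableAt_const _)

lemma ContDiffAt.differentiableAt_pdy (hf : ContDiffAt ℝ 2 f z) : DifferentiableAt ℝ (pdy f) z :=
  hf.differentiableAt_fderiv.clm_apply (differentiableAt_const _)

lemma ContDiffAt.pdx_pdy_comm (hf : ContDiffAt ℝ 2 f z) : pdx (pdy f) z = pdy (pdx f) z := by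
  change fderiv ℝ (fun w => fderiv ℝ f w (0, 1)) z (1, 0) =
    fderiv ℝ (fun w => fderiv ℝ f w (1, 0)) z (0, 1)
  rw [fderiv_clm_apply hf.differentiableAt_fderiv (differentiableAt_const _),
    fderiv_clm_apply hf.differentiableAt_fderiv (differentiableAt_const _)]
  simpa using hf.isSymmSndFDerivAt (by simp) (1, 0) (0, 1)

lemma IsOpen.exists_const_of_hasFDerivAt (hs : IsOpen s) (hs' : IsPreconnected s)
    {f' : ℝ × ℝ → ℝ × ℝ →L[ℝ] ℝ} (hf : ∀ z ∈ s, HasFDerivAt f (f' z) z)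
    (hx : ∀ z ∈ s, f' z (1, 0) = 0) (hy : ∀ z ∈ s, f' z (0, 1) = 0) : ∃ c, ∀ z ∈ s, f z = c := by
  refine hs.exists_is_const_of_fderiv_eq_zero hs'
    (fun z hz => (hf z hz).differentiableAt.differentiableWithinAt) fun z hz => ?_
  rw [(hf z hz).fderiv]
  exact ContinuousLinearMap.prod_ext (ContinuousLinearMap.ext_ring (by simpa using hx z hz))
    (ContinuousLinearMap.ext_ring (by simpa using hy z hz))

end Partials

lemma hasFDerivAt_inv_snd {z : ℝ × ℝ} (hz : z.2 ≠ 0) :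
    HasFDerivAt (fun w : ℝ × ℝ => w.2⁻¹) (-(z.2 ^ 2)⁻¹ • ContinuousLinearMap.snd ℝ ℝ ℝ) z :=
  (hasDerivAt_inv hz).comp_hasFDerivAt z hasFDerivAt_snd

/-- The components `(11, 12, 22)` of the symmetric tensor `∇dE + RgE` on `H²`. -/
noncomputable def nablaDRg (E : ℝ × ℝ → ℝ) (z : ℝ × ℝ) : ℝ × ℝ × ℝ :=
  (pdx (pdx E) z - pdy E z / z.2 - E z / z.2 ^ 2,
    pdx (pdy E) z + pdx E z / z.2,
    pdy (pdy E) z + pdy E z / z.2 - E z / z.2 ^ 2)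

lemma nablaDRg_sub {E₁ E₂ : ℝ × ℝ → ℝ} {z : ℝ × ℝ} (hE₁ : ContDiffAt ℝ 2 E₁ z)
    (hE₂ : ContDiffAt ℝ 2 E₂ z) : nablaDRg (E₁ - E₂) z = nablaDRg E₁ z - nablaDRg E₂ z := by
  have hd : ∀ᶠ w in 𝓝 z, DifferentiableAt ℝ E₁ w ∧ DifferentiableAt ℝ E₂ w :=
    (hE₁.eventually (by simp)).and (hE₂.eventually (by simp)) |>.mono fun w hw =>
      ⟨hw.1.differentiableAt (by norm_num), hw.2.differentiableAt (by norm_num)⟩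
  have hx : pdx (E₁ - E₂) =ᶠ[𝓝 z] pdx E₁ - pdx E₂ := hd.mono fun w hw => pdx_sub hw.1 hw.2
  have hy : pdy (E₁ - E₂) =ᶠ[𝓝 z] pdy E₁ - pdy E₂ := hd.mono fun w hw => pdy_sub hw.1 hw.2
  have hz := hd.self_of_nhds
  simp only [nablaDRg, hx.pdx_eq, hy.pdx_eq, hy.pdy_eq, Prod.mk_sub_mk, Pi.sub_apply,
    pdx_sub hE₁.differentiableAt_pdx hE₂.differentiableAt_pdx,
    pdx_sub hE₁.differentiableAt_pdy hE₂.differentiableAt_pdy,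
    pdy_sub hE₁.differentiableAt_pdy hE₂.differentiableAt_pdy, pdx_sub hz.1 hz.2, pdy_sub hz.1 hz.2]
  ext <;> ring

lemma nablaDRg_eq_zero_iff {E : ℝ × ℝ → ℝ} {z : ℝ × ℝ} :
    nablaDRg E z = 0 ↔ pdx (pdx E) z = pdy E z / z.2 + E z / z.2 ^ 2 ∧
      pdx (pdy E) z = -(pdx E z / z.2) ∧ pdy (pdy E) z = -(pdy E z / z.2) + E z / z.2 ^ 2 := by
  simp only [nablaDRg, Prod.mk_eq_zero, sub_sub, sub_eq_zero, add_eq_zero_iff_eq_neg]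
  constructor <;> rintro ⟨h₁, h₂, h₃⟩ <;> refine ⟨h₁, h₂, ?_⟩ <;> linarith

section Kernel

variable {E : ℝ × ℝ → ℝ}

lemma exists_const_mul_inv_snd_add_pdy (hE : ∀ z ∈ UHP, ContDiffAt ℝ 2 E z)
    (h : ∀ z ∈ UHP, nablaDRg E z = 0) : ∃ K, ∀ z ∈ UHP, E z * z.2⁻¹ + pdy E z = K := by
  refine isOpen_UHP.exists_const_of_hasFDerivAt isPreconnected_UHP (fun z hz =>
    (((hE z hz).differentiableAt two_ne_zero).hasFDerivAt.fun_mul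
      (hasFDerivAt_inv_snd hz.ne')).fun_add (hE z hz).differentiableAt_pdy.hasFDerivAt)
    (fun z hz => ?_) (fun z hz => ?_)
  · obtain ⟨-, h₁₂, -⟩ := nablaDRg_eq_zero_iff.1 (h z hz)
    simp only [add_apply, smul_apply, ContinuousLinearMap.coe_snd', smul_eq_mul, ← pdx.eq_1]
    linear_combination h₁₂
  · obtain ⟨-, -, h₂₂⟩ := nablaDRg_eq_zero_iff.1 (h z hz)
    simp only [add_apply, smul_apply, ContinuousLinearMap.coe_snd', smul_eq_mul, ← pdy.eq_1]
    linear_combination h₂₂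

lemma exists_const_snd_mul_pdx_sub (hE : ∀ z ∈ UHP, ContDiffAt ℝ 2 E z)
    (h : ∀ z ∈ UHP, nablaDRg E z = 0) {K : ℝ} (hK : ∀ z ∈ UHP, E z * z.2⁻¹ + pdy E z = K) :
    ∃ A, ∀ z ∈ UHP, z.2 * pdx E z - K * z.1 = A := by
  refine isOpen_UHP.exists_const_of_hasFDerivAt isPreconnected_UHP (fun z hz =>
    (hasFDerivAt_snd.fun_mul (hE z hz).differentiableAt_pdx.hasFDerivAt).fun_sub
      (hasFDerivAt_fst.const_mul K))
    (fun z hz => ?_) (fun z hz => ?_)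
  · obtain ⟨h₁₁, -, -⟩ := nablaDRg_eq_zero_iff.1 (h z hz)
    have : z.2 ≠ 0 := hz.ne'
    simp only [add_apply, sub_apply, smul_apply, ContinuousLinearMap.coe_fst',
      ContinuousLinearMap.coe_snd', smul_eq_mul, ← pdx.eq_1]
    rw [h₁₁, ← hK z hz]
    field_simp
    ring
  · obtain ⟨-, h₁₂, -⟩ := nablaDRg_eq_zero_iff.1 (h z hz)
    have : z.2 ≠ 0 := hz.ne'
    simp only [add_apply, sub_apply, smul_apply, ContinuousLinearMap.coe_fst',
      ContinuousLinearMap.coe_snd', smul_eq_mul, ← pdy.eq_1]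
    rw [← (hE z hz).pdx_pdy_comm, h₁₂]
    field_simp
    ring

lemma exists_const_snd_mul_sub (hE : ∀ z ∈ UHP, ContDiffAt ℝ 2 E z) {K A : ℝ}
    (hK : ∀ z ∈ UHP, E z * z.2⁻¹ + pdy E z = K) (hA : ∀ z ∈ UHP, z.2 * pdx E z - K * z.1 = A) :
    ∃ B, ∀ z ∈ UHP, z.2 * E z - K / 2 * (z.1 ^ 2 + z.2 ^ 2) - A * z.1 = B := by
  refine isOpen_UHP.exists_const_of_hasFDerivAt isPreconnected_UHP (fun z hz =>
    ((hasFDerivAt_snd.fun_mul ((hE z hz).differentiableAt two_ne_zero).hasFDerivAt).fun_sub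
      (((hasFDerivAt_fst.pow 2).fun_add (hasFDerivAt_snd.pow 2)).const_mul (K / 2))).fun_sub
      (hasFDerivAt_fst.const_mul A))
    (fun z hz => ?_) (fun z hz => ?_)
  · simp only [add_apply, sub_apply, smul_apply, ContinuousLinearMap.coe_fst',
      ContinuousLinearMap.coe_snd', smul_eq_mul, ← pdx.eq_1]
    linear_combination hA z hz
  · have : z.2 ≠ 0 := hz.ne'
    simp only [add_apply, sub_apply, smul_apply, ContinuousLinearMap.coe_fst',
      ContinuousLinearMap.coe_snd', smul_eq_mul, ← pdy.eq_1]
    rw [← hK z hz]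
    field_simp
    ring

end Kernel

theorem exists_eq_kernel_combination_of_nablaDRg_eq_zero {E : ℝ × ℝ → ℝ}
    (hE : ∀ z ∈ UHP, ContDiffAt ℝ 2 E z) (h : ∀ z ∈ UHP, nablaDRg E z = 0) :
    ∃ a b c : ℝ, ∀ z ∈ UHP,
      E z = a * (z.1 / z.2) + b * (1 / z.2) + c * ((z.1 ^ 2 + z.2 ^ 2) / z.2) := by
  obtain ⟨K, hK⟩ := exists_const_mul_inv_snd_add_pdy hE h
  obtain ⟨A, hA⟩ := exists_const_snd_mul_pdx_sub hE h hK
  obtain ⟨B, hB⟩ := exists_const_snd_mul_sub hE hK hA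
  refine ⟨A, B, K / 2, fun z hz => ?_⟩
  have : z.2 ≠ 0 := hz.ne'
  rw [← hB z hz]
  field_simp
  ring

/-- If two smooth functions `E₁, E₂` on the upper half-plane satisfy
`∇dE₁ + RgE₁ = ∇dE₂ + RgE₂` componentwise for the hyperbolic metric (`R = −1`), then
`E₁ − E₂` is a real linear combination of `k₀ = x/y`, `k₁ = 1/y`, `k₂ = (x² + y²)/y`. -/
theorem nabla_d_Rg_solutions_unique_up_to_kernel
    (E₁ E₂ : (ℝ × ℝ) → ℝ)
    (hE₁ : ContDiffOn ℝ (⊤ : ℕ∞) E₁ UHP)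
    (hE₂ : ContDiffOn ℝ (⊤ : ℕ∞) E₂ UHP)
    (h11 : ∀ z ∈ UHP,
      pdx (fun w => pdx E₁ w) z - pdy E₁ z / z.2 - E₁ z / z.2 ^ 2 =
        pdx (fun w => pdx E₂ w) z - pdy E₂ z / z.2 - E₂ z / z.2 ^ 2)
    (h12 : ∀ z ∈ UHP,
      pdx (fun w => pdy E₁ w) z + pdx E₁ z / z.2 =
        pdx (fun w => pdy E₂ w) z + pdx E₂ z / z.2)
    (h22 : ∀ z ∈ UHP,
      pdy (fun w => pdy E₁ w) z + pdy E₁ z / z.2 - E₁ z / z.2 ^ 2 =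
        pdy (fun w => pdy E₂ w) z + pdy E₂ z / z.2 - E₂ z / z.2 ^ 2) :
    ∃ a b c : ℝ, ∀ z ∈ UHP,
      E₁ z - E₂ z = a * (z.1 / z.2) + b * (1 / z.2) + c * ((z.1 ^ 2 + z.2 ^ 2) / z.2) := by
  have hC2 {E : ℝ × ℝ → ℝ} (hE : ContDiffOn ℝ (⊤ : ℕ∞) E UHP) : ∀ z ∈ UHP, ContDiffAt ℝ 2 E z :=
    fun z hz => (hE.contDiffAt (isOpen_UHP.mem_nhds hz)).of_le (WithTop.coe_le_coe.2 le_top)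
  refine exists_eq_kernel_combination_of_nablaDRg_eq_zero (E := E₁ - E₂)
    (fun z hz => (hC2 hE₁ z hz).sub (hC2 hE₂ z hz)) fun z hz => ?_
  rw [nablaDRg_sub (hC2 hE₁ z hz) (hC2 hE₂ z hz), sub_eq_zero]
  exact Prod.ext (h11 z hz) (Prod.ext (h12 z hz) (h22 z hz))
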